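/- arXiv:1203.3663 — 4 statements merged into one kernel-verified Lean document; each statement's English description precedes it below -/
import Mathlib

section
/- Let (Ω, F, μ) be a probability space with Ω a standard Borel space. Let X : Ω → ℝ^p be measurable, let ε : Ω → E be measurable into a measurable space E with ε independent of X, let h : ℝ^p → ℝ^d be measurable, and define Y := φ(h(X), ε) for a measurable φ : ℝ^d × E → ℝ. Then Y and X are conditionally independent given W := h ∘ X. -/
open MeasureTheory ProbabilityTheory

/-!
Write `W = h ∘ X`. Since `σ(W) ≤ σ(X)` and `ε` is independent of `X`, conditioning first on
`σ(X)` gives `P(ε ∈ D, X ∈ B | W) = P(ε ∈ D) P(X ∈ B | W) = P(ε ∈ D | W) P(X ∈ B | W)`,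
so `ε` and `X` are conditionally independent given `W`. Conditional independence given `W`
survives adjoining `σ(W)` to the left-hand σ-algebra, and `Y = φ (W, ε)` is measurable with
respect to `σ(ε) ⊔ σ(W)`.
-/

namespace MeasurableSpace

variable {Ω : Type*}

def interSets (m₁ m₂ : MeasurableSpace Ω) : Set (Set Ω) :=
  Set.image2 (· ∩ ·) {s | MeasurableSet[m₁] s} {s | MeasurableSet[m₂] s}

theorem isPiSystem_interSets (m₁ m₂ : MeasurableSpace Ω) : IsPiSystem (interSets m₁ m₂) := by
  rintro _ ⟨a, ha, b, hb, rfl⟩ _ ⟨a', ha', b', hb', rfl⟩ -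
  exact ⟨a ∩ a', ha.inter ha', b ∩ b', hb.inter hb', (Set.inter_inter_inter_comm a b a' b').symm⟩

theorem generateFrom_interSets (m₁ m₂ : MeasurableSpace Ω) :
    generateFrom (interSets m₁ m₂) = m₁ ⊔ m₂ := by
  refine le_antisymm (generateFrom_le ?_) (sup_le (fun s hs ↦ ?_) (fun s hs ↦ ?_))
  · rintro _ ⟨a, ha, b, hb, rfl⟩
    exact (le_sup_left (b := m₂) a ha).inter (le_sup_right (a := m₁) b hb)
  · exact measurableSet_generateFrom ⟨s, hs, Set.univ, .univ, Set.inter_univ s⟩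
  · exact measurableSet_generateFrom ⟨Set.univ, .univ, s, hs, Set.univ_inter s⟩

end MeasurableSpace

namespace ProbabilityTheory

variable {Ω : Type*} {m m₁ m₂ mΩ : MeasurableSpace Ω} {μ : Measure Ω} [IsFiniteMeasure μ]

theorem condExp_inter_ae_eq_indicator {s t : Set Ω} (ht : MeasurableSet[m] t)
    (hs : MeasurableSet s) :
    μ⟦t ∩ s | m⟧ =ᵐ[μ] t.indicator (μ⟦s | m⟧) := by
  rw [← Set.indicator_indicator]
  exact condExp_indicator ((integrable_const 1).indicator hs) ht

variable [StandardBorelSpace Ω]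

theorem CondIndep.sup_conditioning_left {hm : m ≤ mΩ} (hm₁ : m₁ ≤ mΩ) (hm₂ : m₂ ≤ mΩ)
    (h : CondIndep m m₁ m₂ hm μ) : CondIndep m (m₁ ⊔ m) m₂ hm μ := by
  have hp₁ : ∀ s ∈ m₁.interSets m, MeasurableSet s := by
    rintro _ ⟨a, ha, c, hc, rfl⟩
    exact (hm₁ a ha).inter (hm c hc)
  refine CondIndepSets.condIndep (sup_le hm₁ hm) hm₂
    (MeasurableSpace.isPiSystem_interSets m₁ m) (@MeasurableSpace.isPiSystem_measurableSet Ω m₂)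
    (MeasurableSpace.generateFrom_interSets m₁ m).symm
    (@MeasurableSpace.generateFrom_measurableSet Ω m₂).symm ?_
  refine (condIndepSets_iff _ _ _ _ hp₁ (fun s hs ↦ hm₂ s hs) μ).mpr ?_
  rintro _ b ⟨a, ha, c, hc, rfl⟩ hb
  have hab := (condIndep_iff m m₁ m₂ hm hm₁ hm₂ μ).mp h a b ha hb
  calc μ⟦a ∩ c ∩ b | m⟧ = μ⟦c ∩ (a ∩ b) | m⟧ := by rw [Set.inter_right_comm, Set.inter_comm]
    _ =ᵐ[μ] c.indicator (μ⟦a ∩ b | m⟧) :=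
      condExp_inter_ae_eq_indicator hc ((hm₁ a ha).inter (hm₂ b hb))
    _ =ᵐ[μ] c.indicator (μ⟦a | m⟧ * μ⟦b | m⟧) := hab.indicator
    _ = c.indicator (μ⟦a | m⟧) * μ⟦b | m⟧ := funext fun ω ↦ Set.indicator_mul_left c _ _
    _ =ᵐ[μ] μ⟦a ∩ c | m⟧ * μ⟦b | m⟧ := by
      refine Filter.EventuallyEq.mul ?_ .rfl
      rw [Set.inter_comm]
      exact (condExp_inter_ae_eq_indicator hc (hm₁ a ha)).symm

theorem condIndep_of_indep_of_le (hm₁ : m₁ ≤ mΩ) (hm₂ : m₂ ≤ mΩ) (hm : m ≤ m₂)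
    (h : Indep m₁ m₂ μ) : CondIndep m m₁ m₂ (hm.trans hm₂) μ := by
  rw [condIndep_iff m m₁ m₂ _ hm₁ hm₂]
  intro a b ha hb
  have ha_meas : StronglyMeasurable[m₁] (a.indicator fun _ ↦ (1 : ℝ)) :=
    stronglyMeasurable_const.indicator ha
  have ha₂ : μ⟦a | m₂⟧ =ᵐ[μ] fun _ ↦ μ[a.indicator fun _ ↦ (1 : ℝ)] :=
    condExp_indep_eq hm₁ hm₂ ha_meas h
  have ha' : μ⟦a | m⟧ =ᵐ[μ] fun _ ↦ μ[a.indicator fun _ ↦ (1 : ℝ)] :=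
    condExp_indep_eq hm₁ (hm.trans hm₂) ha_meas (indep_of_indep_of_le_right h hm)
  calc μ⟦a ∩ b | m⟧ =ᵐ[μ] μ[μ⟦b ∩ a | m₂⟧ | m] := by
        rw [Set.inter_comm]; exact (condExp_condExp_of_le hm hm₂).symm
    _ =ᵐ[μ] μ[b.indicator fun _ ↦ μ[a.indicator fun _ ↦ (1 : ℝ)] | m] :=
        condExp_congr_ae ((condExp_inter_ae_eq_indicator hb (hm₁ a ha)).trans ha₂.indicator)
    _ = μ[μ[a.indicator fun _ ↦ (1 : ℝ)] • b.indicator fun _ ↦ (1 : ℝ) | m] := by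
        congr 1; ext ω; by_cases hω : ω ∈ b <;> simp [hω]
    _ =ᵐ[μ] μ[a.indicator fun _ ↦ (1 : ℝ)] • μ⟦b | m⟧ := condExp_smul _ _ _
    _ =ᵐ[μ] μ⟦a | m⟧ * μ⟦b | m⟧ := by
        filter_upwards [ha'] with ω hω
        simp [hω]

end ProbabilityTheory

/-- The structural principle underlying the dimension-reduction model (1) of the paper:
if `Y = φ(h(X), ε)` with `ε` independent of `X`, then `Y` and `X` are conditionally
independent given `W = h ∘ X`. -/
theorem condIndep_of_noise {Ω E : Type*} {mΩ : MeasurableSpace Ω} [StandardBorelSpace Ω]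
    [MeasurableSpace E] {μ : Measure Ω} [IsProbabilityMeasure μ] {p d : ℕ}
    (X : Ω → (Fin p → ℝ)) (hX : Measurable X)
    (ε : Ω → E) (hε : Measurable ε)
    (hindep : IndepFun ε X μ)
    (h : (Fin p → ℝ) → (Fin d → ℝ)) (hh : Measurable h)
    (φ : (Fin d → ℝ) × E → ℝ) (hφ : Measurable φ)
    (Y : Ω → ℝ) (hY : Y = fun ω => φ (h (X ω), ε ω))
    (hW : Measurable (fun ω => h (X ω))) :
    CondIndepFun (MeasurableSpace.comap (fun ω => h (X ω)) inferInstance)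
      hW.comap_le Y X μ := by
  set W : Ω → (Fin d → ℝ) := fun ω => h (X ω)
  have hWX : MeasurableSpace.comap W inferInstance ≤ MeasurableSpace.comap X inferInstance :=
    (hh.comp (comap_measurable X)).comap_le
  have hY_meas : Measurable[.comap ε inferInstance ⊔ .comap W inferInstance] Y := by
    rw [hY]
    exact hφ.comp (((comap_measurable W).mono le_sup_right le_rfl).prodMk
      ((comap_measurable ε).mono le_sup_left le_rfl))
  rw [condIndepFun_iff_condIndep]
  exact condIndep_of_condIndep_of_le_left
    ((condIndep_of_indep_of_le hε.comap_le hX.comap_le hWX hindep).sup_conditioning_left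
      hε.comap_le hX.comap_le) hY_meas.comap_le
end

section
/- Let (Ω, F, μ) be a probability space with Ω a standard Borel space, and let Y : Ω → ℝ, C : Ω → ℝ, X : Ω → ℝ^p, and W : Ω → ℝ^d be measurable with W = h ∘ X for a measurable h. Assume (i) Y and X are conditionally independent given W, and (ii) C is independent of the pair (Y, X). Then the pair (Y, C) and X are conditionally independent given W. -/
/-!
Write `m = σ(W) ≤ σ(X)`. Sets `A ∩ B` with `A ∈ σ(Y)`, `B ∈ σ(C)` form a π-system generating
`σ(Y, C)`, so it suffices to factor `μ⟦A ∩ B ∩ E | m⟧` for `E ∈ σ(X)`. Since `C` is independent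
of `σ(Y, X)`, which contains `m`, the event `B` can be pulled out of conditional probabilities
given `m` of events in `σ(Y, X)`:
`μ⟦B ∩ (A ∩ E) | m⟧ = μ B · μ⟦A ∩ E | m⟧ = μ B · μ⟦A | m⟧ · μ⟦E | m⟧ = μ⟦B ∩ A | m⟧ · μ⟦E | m⟧`,
the middle step being `Y ⫫ X | m`.
-/

open MeasureTheory ProbabilityTheory MeasurableSpace Set

lemma IsPiSystem.image2_inter {α : Type*} {C D : Set (Set α)} (hC : IsPiSystem C)
    (hD : IsPiSystem D) : IsPiSystem (image2 (· ∩ ·) C D) := by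
  rintro _ ⟨c₁, hc₁, d₁, hd₁, rfl⟩ _ ⟨c₂, hc₂, d₂, hd₂, rfl⟩ hne
  rw [inter_inter_inter_comm] at hne ⊢
  exact mem_image2_of_mem (hC _ hc₁ _ hc₂ hne.left) (hD _ hd₁ _ hd₂ hne.right)

lemma MeasurableSpace.generateFrom_image2_inter {α : Type*} (m₁ m₂ : MeasurableSpace α) :
    generateFrom (image2 (· ∩ ·) {s | MeasurableSet[m₁] s} {s | MeasurableSet[m₂] s})
      = m₁ ⊔ m₂ := by
  refine le_antisymm (generateFrom_le ?_) (sup_le ?_ ?_)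
  · rintro _ ⟨a, ha, b, hb, rfl⟩
    exact (le_sup_left (b := m₂) _ ha).inter (le_sup_right (a := m₁) _ hb)
  · exact fun a ha ↦ measurableSet_generateFrom ⟨a, ha, univ, .univ, inter_univ a⟩
  · exact fun b hb ↦ measurableSet_generateFrom ⟨univ, .univ, b, hb, univ_inter b⟩

section
variable {Ω : Type*} {m m₁ m₂ m₃ mΩ : MeasurableSpace Ω} {μ : Measure Ω} [IsFiniteMeasure μ]

lemma condExp_indicator_inter_of_indep (hm : m ≤ m₁) (h₁ : m₁ ≤ mΩ) (h₃ : m₃ ≤ mΩ)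
    (hind : Indep m₃ m₁ μ) {B D : Set Ω} (hB : MeasurableSet[m₃] B) (hD : MeasurableSet[m₁] D) :
    μ⟦B ∩ D | m⟧ =ᵐ[μ] fun ω ↦ μ.real B * (μ⟦D | m⟧) ω := by
  have hD' : MeasurableSet D := h₁ _ hD
  have hBD : MeasurableSet (B ∩ D) := (h₃ _ hB).inter hD'
  refine (ae_eq_condExp_of_forall_setIntegral_eq (hm.trans h₁)
    ((integrable_const 1).indicator hBD)
    (fun s _ _ ↦ (integrable_condExp.const_mul _).integrableOn) (fun G hG _ ↦ ?_)
    (stronglyMeasurable_condExp.aestronglyMeasurable.const_mul _)).symm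
  calc ∫ ω in G, μ.real B * (μ⟦D | m⟧) ω ∂μ
      = μ.real B * ∫ ω in G, (μ⟦D | m⟧) ω ∂μ := integral_const_mul _ _
    _ = μ.real B * μ.real (D ∩ G) := by
      rw [setIntegral_condExp (hm.trans h₁) ((integrable_const 1).indicator hD') hG,
        integral_indicator_const _ hD', measureReal_restrict_apply hD', smul_eq_mul, mul_one]
    _ = μ.real (B ∩ (D ∩ G)) := by
      rw [measureReal_def, measureReal_def, measureReal_def,
        (Indep_iff _ _ _).1 hind _ _ hB (hD.inter (hm _ hG)), ENNReal.toReal_mul]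
    _ = ∫ ω in G, (B ∩ D).indicator (fun _ ↦ (1 : ℝ)) ω ∂μ := by
      rw [integral_indicator_const _ hBD, measureReal_restrict_apply hBD, smul_eq_mul, mul_one,
        inter_assoc]

theorem CondIndep.sup_left_of_indep [StandardBorelSpace Ω] {hm : m ≤ mΩ}
    (h₁ : m₁ ≤ mΩ) (h₂ : m₂ ≤ mΩ) (h₃ : m₃ ≤ mΩ) (hm₁₂ : m ≤ m₁ ⊔ m₂)
    (hcond : CondIndep m m₁ m₂ hm μ) (hind : Indep m₃ (m₁ ⊔ m₂) μ) :
    CondIndep m (m₁ ⊔ m₃) m₂ hm μ := by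
  refine CondIndepSets.condIndep (sup_le h₁ h₃) h₂
    ((@isPiSystem_measurableSet Ω m₁).image2_inter (@isPiSystem_measurableSet Ω m₃))
    (@isPiSystem_measurableSet Ω m₂) (generateFrom_image2_inter m₁ m₃).symm
    (@generateFrom_measurableSet Ω m₂).symm ?_
  rw [condIndepSets_iff m hm _ {s | MeasurableSet[m₂] s} ?meas h₂]
  case meas =>
    rintro _ ⟨A, hA, B, hB, rfl⟩
    exact (h₁ A hA).inter (h₃ B hB)
  rintro _ E ⟨A, hA, B, hB, rfl⟩ hE
  have hBAE : μ⟦B ∩ (A ∩ E) | m⟧ =ᵐ[μ] fun ω ↦ μ.real B * (μ⟦A ∩ E | m⟧) ω :=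
    condExp_indicator_inter_of_indep hm₁₂ (sup_le h₁ h₂) h₃ hind hB
      ((le_sup_left (b := m₂) _ hA).inter (le_sup_right (a := m₁) _ hE))
  have hBA : μ⟦B ∩ A | m⟧ =ᵐ[μ] fun ω ↦ μ.real B * (μ⟦A | m⟧) ω :=
    condExp_indicator_inter_of_indep hm₁₂ (sup_le h₁ h₂) h₃ hind hB (le_sup_left (b := m₂) _ hA)
  have hAE := (condIndep_iff m m₁ m₂ hm h₁ h₂ μ).1 hcond A E hA hE
  simp only [inter_comm A B, inter_assoc]
  filter_upwards [hBAE, hBA, hAE] with ω hBAEω hBAω hAEω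
  rw [Pi.mul_apply, hBAEω, hBAω, hAEω, Pi.mul_apply, mul_assoc]

end

/-- Key claim of Section 3 of the paper: under totally independent censorship `C ⫫ (Y, X)`,
if `Y ⫫ X | W` with `W = h ∘ X`, then `(Y, C) ⫫ X | W`. -/
theorem condIndepFun_pair_censoring {Ω : Type*} {mΩ : MeasurableSpace Ω}
    [StandardBorelSpace Ω] {μ : Measure Ω} [IsProbabilityMeasure μ] {p d : ℕ}
    (Y : Ω → ℝ) (hY : Measurable Y)
    (C : Ω → ℝ) (hC : Measurable C)
    (X : Ω → (Fin p → ℝ)) (hX : Measurable X)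
    (h : (Fin p → ℝ) → (Fin d → ℝ)) (hh : Measurable h)
    (W : Ω → (Fin d → ℝ)) (hWdef : W = fun ω => h (X ω)) (hW : Measurable W)
    (hYX : CondIndepFun (MeasurableSpace.comap W inferInstance) hW.comap_le Y X μ)
    (hcens : IndepFun C (fun ω => (Y ω, X ω)) μ) :
    CondIndepFun (MeasurableSpace.comap W inferInstance) hW.comap_le
      (fun ω => (Y ω, C ω)) X μ := by
  have hWX : MeasurableSpace.comap W inferInstance ≤ MeasurableSpace.comap X inferInstance := by
    subst hWdef
    exact (hh.comp (comap_measurable X)).comap_le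
  have hYC : MeasurableSpace.comap (fun ω ↦ (Y ω, C ω)) inferInstance
      = MeasurableSpace.comap Y inferInstance ⊔ MeasurableSpace.comap C inferInstance :=
    comap_prodMk Y C
  have hYXpair : MeasurableSpace.comap (fun ω ↦ (Y ω, X ω)) inferInstance
      = MeasurableSpace.comap Y inferInstance ⊔ MeasurableSpace.comap X inferInstance :=
    comap_prodMk Y X
  rw [condIndepFun_iff_condIndep] at hYX
  rw [condIndepFun_iff_condIndep, hYC]
  rw [IndepFun_iff_Indep, hYXpair] at hcens
  exact CondIndep.sup_left_of_indep hY.comap_le hX.comap_le hC.comap_le (hWX.trans le_sup_right)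
    hYX hcens
end

section
/- Let (Ω, F, μ) be a probability space, let U be an integrable real random variable, let Y, C : Ω → ℝ be measurable, and suppose C is independent of the pair (Y, U). Fix t ∈ ℝ and set Y* := min(Y, C). Then E[U · 1{Y* > t}] · μ(Y > t) = E[U · 1{Y > t}] · μ(Y* > t). Consequently, if μ(Y > t) > 0 and μ(C > t) > 0, then E[U · 1{Y* > t}] / μ(Y* > t) = E[U · 1{Y > t}] / μ(Y > t). -/
/-!
Since `{Y* > t} = {Y > t} ∩ {C > t}` and `C` is independent of `(Y, U)`, both the slice integral
`E[U·1{Y* > t}]` and the survival probability `μ(Y* > t)` are `μ(C > t)` times their uncensored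
counterparts; the common factor cancels in the cross-multiplied identity and in the ratio.
-/

open MeasureTheory ProbabilityTheory Set

namespace ProbabilityTheory

variable {Ω α 𝓧 : Type*} {mΩ : MeasurableSpace Ω} {mα : MeasurableSpace α}
  {m𝓧 : MeasurableSpace 𝓧} {μ : Measure Ω}

lemma IndepFun.integral_indicator_preimage_comp {C : Ω → α} {X : Ω → 𝓧}
    (hCX : IndepFun C X μ) (hC : Measurable C) (hX : AEMeasurable X μ)
    {A : Set α} (hA : MeasurableSet A) {f : 𝓧 → ℝ} (hf : AEStronglyMeasurable f (μ.map X)) :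
    ∫ ω, (C ⁻¹' A).indicator (fun ω => f (X ω)) ω ∂μ = μ.real (C ⁻¹' A) * ∫ ω, f (X ω) ∂μ := by
  rw [integral_indicator (hC hA)]
  exact ((IndepFun_iff_Indep _ _ _).1 hCX).setIntegral_eq_mul hC.comap_le hX ⟨A, hA, rfl⟩ hf

variable [LinearOrder α] [TopologicalSpace α] [OrderClosedTopology α] [OpensMeasurableSpace α]

lemma IndepFun.measure_lt_min {Y C : Ω → α} (hCY : IndepFun C Y μ) (t : α) :
    μ {ω | t < min (Y ω) (C ω)} = μ {ω | t < C ω} * μ {ω | t < Y ω} := by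
  have h := hCY.meas_inter ⟨Ioi t, measurableSet_Ioi, rfl⟩ ⟨Ioi t, measurableSet_Ioi, rfl⟩
  simpa only [preimage, mem_Ioi, ← ofPred_and, lt_min_iff, and_comm] using h

lemma IndepFun.integral_ite_lt_min {Y C : Ω → α} {U : Ω → ℝ}
    (hCYU : IndepFun C (fun ω => (Y ω, U ω)) μ) (hY : Measurable Y) (hC : Measurable C)
    (hU : AEMeasurable U μ) (t : α) :
    ∫ ω, (if t < min (Y ω) (C ω) then U ω else 0) ∂μ
      = μ.real {ω | t < C ω} * ∫ ω, (if t < Y ω then U ω else 0) ∂μ := by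
  have hf : Measurable fun p : α × ℝ => if t < p.1 then p.2 else 0 :=
    Measurable.ite (measurable_fst measurableSet_Ioi) measurable_snd measurable_const
  have h := hCYU.integral_indicator_preimage_comp hC (hY.aemeasurable.prodMk hU)
    (measurableSet_Ioi (a := t)) hf.aestronglyMeasurable
  refine Eq.trans (integral_congr_ae (Filter.Eventually.of_forall fun ω => ?_)) h
  by_cases hYt : t < Y ω <;> by_cases hCt : t < C ω <;> simp [hYt, hCt, indicator]

end ProbabilityTheory

/-- The identity showing that the moment estimators `μ̂*_{t0}`, `Σ̂*_{t0}` of Section 3 of the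
paper target the uncensored slice moments: with `Y* = min(Y, C)` and `C ⫫ (Y, U)`,
`E[U·1{Y* > t}]·μ(Y > t) = E[U·1{Y > t}]·μ(Y* > t)`, and hence the two slice means agree. -/
theorem censored_slice_mean {Ω : Type*} {mΩ : MeasurableSpace Ω} {μ : Measure Ω}
    [IsProbabilityMeasure μ]
    (U : Ω → ℝ) (hU : Integrable U μ)
    (Y : Ω → ℝ) (hY : Measurable Y)
    (C : Ω → ℝ) (hC : Measurable C)
    (hindep : IndepFun C (fun ω => (Y ω, U ω)) μ)
    (t : ℝ) :
    (∫ ω, (if t < min (Y ω) (C ω) then U ω else 0) ∂μ) * (μ {ω | t < Y ω}).toReal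
        = (∫ ω, (if t < Y ω then U ω else 0) ∂μ) * (μ {ω | t < min (Y ω) (C ω)}).toReal
      ∧ (0 < μ {ω | t < Y ω} → 0 < μ {ω | t < C ω} →
          (∫ ω, (if t < min (Y ω) (C ω) then U ω else 0) ∂μ)
              / (μ {ω | t < min (Y ω) (C ω)}).toReal
            = (∫ ω, (if t < Y ω then U ω else 0) ∂μ) / (μ {ω | t < Y ω}).toReal) := by
  have hslice := hindep.integral_ite_lt_min hY hC hU.aemeasurable t
  have hsurv : (μ {ω | t < min (Y ω) (C ω)}).toReal
      = (μ {ω | t < C ω}).toReal * (μ {ω | t < Y ω}).toReal := by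
    rw [IndepFun.measure_lt_min (Y := Y) (C := C) (hindep.comp measurable_id measurable_fst) t,
      ENNReal.toReal_mul]
  rw [hslice, hsurv, measureReal_def]
  refine ⟨by ring, fun _ hCt => ?_⟩
  exact mul_div_mul_left _ _ (ENNReal.toReal_pos hCt.ne' (measure_ne_top _ _)).ne'
end

section
/- Let (Ω, F, μ) be a probability space, let U be an integrable real random variable, let Y, C : Ω → ℝ be measurable, and suppose C is independent of the pair (Y, U). Fix t ∈ ℝ, and let S_C(y) := μ(C > y). Assume that μ(C = y) = 0 for every y ∈ ℝ and that S_C(t) > 0. Then the inverse-probability-of-censoring weighted expectation recovers the complete-data expectation: E[ U · 1{Y ≤ C} · 1{Y ≤ t} / S_C(Y) ] = E[ U · 1{Y ≤ t} ]. -/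
/-!
By independence, the law of `((Y, U), C)` is the product of the laws of `(Y, U)` and `C`, so the
left-hand side is an iterated integral whose inner integral runs over `C` alone. For fixed
`(Y, U) = (y, u)` with `y ≤ t` that inner integral is `u · μ(C ≥ y) / S_C(y)`, and
`μ(C ≥ y) = S_C(y)` because `C` has no atoms.
-/

open MeasureTheory ProbabilityTheory Set

theorem antitone_measureReal_Ici (ν : Measure ℝ) [IsFiniteMeasure ν] :
    Antitone fun y => ν.real (Ici y) :=
  fun _ _ hab => measureReal_mono (Ici_subset_Ici.2 hab)

theorem measureReal_map_Ici_eq_measureReal_lt {Ω : Type*} {mΩ : MeasurableSpace Ω}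
    {μ : Measure Ω} {C : Ω → ℝ} (hC : Measurable C) {y : ℝ} (hy : μ {ω | C ω = y} = 0) :
    (μ.map C).real (Ici y) = μ.real {ω | y < C ω} := by
  rw [map_measureReal_apply hC measurableSet_Ici, ← Ioi_union_left, preimage_union]
  exact measureReal_congr (union_ae_eq_left_of_ae_eq_empty (ae_eq_empty.mpr hy))

theorem integral_ite_le_div_measureReal_Ici {ν : Measure ℝ} {y : ℝ} (hy : ν.real (Ici y) ≠ 0)
    (u : ℝ) : ∫ c, (if y ≤ c then u / ν.real (Ici y) else 0) ∂ν = u := by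
  have : (fun c => if y ≤ c then u / ν.real (Ici y) else 0)
      = (Ici y).indicator fun _ => u / ν.real (Ici y) := by
    ext c; simp [indicator_apply]
  rw [this, integral_indicator_const _ measurableSet_Ici, smul_eq_mul, mul_div_cancel₀ _ hy]

theorem integrable_ite_div_of_antitone {ρ : Measure (ℝ × ℝ)} {ν : Measure ℝ} [SFinite ρ]
    [IsFiniteMeasure ν] (hρ : Integrable Prod.snd ρ) {S : ℝ → ℝ} (hS : Antitone S) {t : ℝ}
    (ht : 0 < S t) :
    Integrable (fun p : (ℝ × ℝ) × ℝ => if p.1.1 ≤ p.2 ∧ p.1.1 ≤ t then p.1.2 / S p.1.1 else 0)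
      (ρ.prod ν) := by
  have hmeas : Measurable fun p : (ℝ × ℝ) × ℝ =>
      if p.1.1 ≤ p.2 ∧ p.1.1 ≤ t then p.1.2 / S p.1.1 else 0 := by
    have := hS.measurable
    refine Measurable.ite ?_ (by fun_prop) measurable_const
    exact (measurableSet_le measurable_fst.fst measurable_snd).inter
      (measurableSet_le measurable_fst.fst measurable_const)
  refine ((hρ.norm.div_const (S t)).mul_prod (integrable_const (1 : ℝ))).mono'
    hmeas.aestronglyMeasurable (.of_forall fun p => ?_)
  split_ifs with h
  · rw [norm_div, mul_one, Real.norm_of_nonneg (ht.trans_le (hS h.2)).le]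
    exact div_le_div_of_nonneg_left (norm_nonneg _) ht (hS h.2)
  · simp only [norm_zero, mul_one]
    positivity

theorem integral_prod_ite_div_measureReal_Ici {ρ : Measure (ℝ × ℝ)} {ν : Measure ℝ}
    [SFinite ρ] [IsFiniteMeasure ν] (hρ : Integrable Prod.snd ρ) {t : ℝ}
    (ht : 0 < ν.real (Ici t)) :
    ∫ p, (if p.1.1 ≤ p.2 ∧ p.1.1 ≤ t then p.1.2 / ν.real (Ici p.1.1) else 0) ∂(ρ.prod ν)
      = ∫ q, (if q.1 ≤ t then q.2 else 0) ∂ρ := by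
  have hS := antitone_measureReal_Ici ν
  rw [integral_prod _ (integrable_ite_div_of_antitone hρ hS ht)]
  congr 1 with q
  by_cases hq : q.1 ≤ t
  · simp only [hq, and_true, if_true]
    exact integral_ite_le_div_measureReal_Ici (ht.trans_le (hS hq)).ne' q.2
  · simp [hq]

theorem ProbabilityTheory.IndepFun.integral_comp_prodMk_eq_integral_prod {Ω β γ E : Type*}
    {mΩ : MeasurableSpace Ω} {μ : Measure Ω} [IsFiniteMeasure μ] [MeasurableSpace β]
    [MeasurableSpace γ] [NormedAddCommGroup E] [NormedSpace ℝ E] {W : Ω → β} {C : Ω → γ}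
    (hWC : IndepFun W C μ) (hW : AEMeasurable W μ) (hC : AEMeasurable C μ)
    {f : β × γ → E} (hf : AEStronglyMeasurable f ((μ.map W).prod (μ.map C))) :
    ∫ ω, f (W ω, C ω) ∂μ = ∫ p, f p ∂((μ.map W).prod (μ.map C)) := by
  rw [← hWC.map_prod_eq_prod_map_map hW hC] at hf ⊢
  exact (integral_map (hW.prodMk hC) hf).symm

/-- The inverse-probability-of-censoring weighting identity behind the censoring-adjusted
estimators `μ̂*_{t1}`, `Σ̂*_{t1}` of Section 3 of the paper: under `C ⫫ (Y, U)`, a continuous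
censoring distribution, and `S_C(t) > 0`,
`E[U·1{Y ≤ C}·1{Y ≤ t}/S_C(Y)] = E[U·1{Y ≤ t}]`. -/
theorem ipcw_identity {Ω : Type*} {mΩ : MeasurableSpace Ω} {μ : Measure Ω}
    [IsProbabilityMeasure μ]
    (U : Ω → ℝ) (hU : Integrable U μ)
    (Y : Ω → ℝ) (hY : Measurable Y)
    (C : Ω → ℝ) (hC : Measurable C)
    (hindep : IndepFun C (fun ω => (Y ω, U ω)) μ)
    (t : ℝ)
    (S : ℝ → ℝ) (hS : ∀ y, S y = (μ {ω | y < C ω}).toReal)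
    (hcont : ∀ y : ℝ, μ {ω | C ω = y} = 0)
    (hSt : 0 < S t) :
    ∫ ω, (if Y ω ≤ C ω ∧ Y ω ≤ t then U ω / S (Y ω) else 0) ∂μ
      = ∫ ω, (if Y ω ≤ t then U ω else 0) ∂μ := by
  obtain rfl : S = fun y => (μ.map C).real (Ici y) :=
    funext fun y => (hS y).trans (measureReal_map_Ici_eq_measureReal_lt hC (hcont y)).symm
  have hYU : AEMeasurable (fun ω => (Y ω, U ω)) μ := hY.aemeasurable.prodMk hU.aemeasurable
  have hsnd : Integrable Prod.snd (μ.map fun ω => (Y ω, U ω)) :=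
    (integrable_map_measure measurable_snd.aestronglyMeasurable hYU).2 hU
  rw [hindep.symm.integral_comp_prodMk_eq_integral_prod hYU hC.aemeasurable
      (integrable_ite_div_of_antitone hsnd (antitone_measureReal_Ici _) hSt).aestronglyMeasurable,
    integral_prod_ite_div_measureReal_Ici hsnd hSt, integral_map hYU]
  exact (measurable_snd.ite (measurableSet_le measurable_fst measurable_const)
    measurable_const).aestronglyMeasurable
end
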